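/- Let q be a prime power, G = GL(2,𝔽_{q²}), H = GL(2,𝔽_q) ≤ G, B the subgroup of upper-triangular matrices in G, B(q) = B ∩ H, and C = {diag(a, a^q) : a ∈ 𝔽_{q²}^×}. Let θ₁, θ₂: 𝔽_{q²}^× → ℂ^× be group homomorphisms, θ the linear character of B given by θ([[a,b],[0,d]]) = θ₁(a)θ₂(d), and I[θ](g) = (1/|B|)·∑_{u ∈ G, u⁻¹gu ∈ B} θ(u⁻¹gu) the induced character. Then for all x, y ∈ 𝔽_{q²}^× with x⁻¹y ∉ 𝔽_q: ∑_{h ∈ H} I[θ](diag(x,y)·h) = (θ₁(x)θ₂(y) + θ₁(y)θ₂(x))·(∑_{b ∈ B(q)} θ(b)) + (q−1)·θ₁(x)θ₂(y)·(∑_{c ∈ C} θ(c))·(∑_{t ∈ 𝔽_q^×} θ₂(t)). -/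

import Mathlib

open scoped Classical

/-- The subgroup `H = GL(2,𝔽_q)` of `G = GL(2,𝔽_{q²})`, embedded entrywise. -/
def Hsub (F K : Type*) [Field F] [Field K] [Algebra F K] :
    Subgroup ((Matrix (Fin 2) (Fin 2) K)ˣ) :=
  (Units.map ((algebraMap F K).mapMatrix.toMonoidHom :
    Matrix (Fin 2) (Fin 2) F →* Matrix (Fin 2) (Fin 2) K)).range

/-- The diagonal matrix `m_{x,y} = diag(x,y)` as an element of `GL(2,K)`. -/
noncomputable def diagGL {K : Type*} [Field K] (x y : Kˣ) : (Matrix (Fin 2) (Fin 2) K)ˣ :=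
  ((Matrix.isUnit_iff_isUnit_det !![(x : K), 0; 0, (y : K)]).mpr (by
    rw [Matrix.det_fin_two_of]
    simp [x.isUnit.mul y.isUnit])).unit

/-- Extension by zero of a character of `Kˣ` to `K`. -/
noncomputable def extK {K : Type*} [Field K] (χ : Kˣ →* ℂˣ) : K → ℂ :=
  fun a => if h : a = 0 then 0 else χ (Units.mk0 a h)

/-- The character of `GL(2,K)` induced from the linear character
`[[a,b],[0,d]] ↦ θ₁(a)θ₂(d)` of the Borel subgroup `B` of upper triangular matrices,
via the Frobenius formula. -/
noncomputable def indB {K : Type*} [Field K] [Fintype K] (θ₁ θ₂ : Kˣ →* ℂˣ)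
    (g : (Matrix (Fin 2) (Fin 2) K)ˣ) : ℂ :=
  (({u : (Matrix (Fin 2) (Fin 2) K)ˣ |
      (u : Matrix (Fin 2) (Fin 2) K) 1 0 = 0}.toFinset.card : ℂ))⁻¹ *
    ∑ u : (Matrix (Fin 2) (Fin 2) K)ˣ,
      if ((u⁻¹ * g * u : (Matrix (Fin 2) (Fin 2) K)ˣ) : Matrix (Fin 2) (Fin 2) K) 1 0 = 0 then
        extK θ₁ (((u⁻¹ * g * u : (Matrix (Fin 2) (Fin 2) K)ˣ) :
            Matrix (Fin 2) (Fin 2) K) 0 0) *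
        extK θ₂ (((u⁻¹ * g * u : (Matrix (Fin 2) (Fin 2) K)ˣ) :
            Matrix (Fin 2) (Fin 2) K) 1 1)
      else 0

/-!
For `g ∈ GL₂(K)` the summand `u ↦ [u⁻¹gu ∈ B] θ(u⁻¹gu)` of the Frobenius formula is invariant
under `u ↦ ub` for `b ∈ B`, because `θ` only sees the diagonal, on which conjugation by `B` acts
trivially. Hence `I[θ](g)` is the sum of `[s⁻¹gs ∈ B] θ(s⁻¹gs)` over the transversal of `G/B`
formed by the swap `J` and the matrices `s_c = [[1,0],[c,1]]`, `c ∈ K`. For `g = diag(x,y)·h`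
summed over `h ∈ H`:
* `J` and `c = 0` give the two `B(q)`-sums (after conjugating `H` by `J ∈ H`);
* `c ∈ 𝔽_q^×` contributes nothing, since `s_c⁻¹gs_c ∈ B` would force `x⁻¹y ∈ 𝔽_q`;
* for `c ∉ 𝔽_q`, `{1, c}` is an `𝔽_q`-basis of `K`, so `h` is determined by `λ = h₀₀ + h₀₁c`
  and `κ = h₁₀ + h₁₁c`. The condition `s_c⁻¹gs_c ∈ B` reads `κ = rcλ` with `r = x/y`, and the
  Frobenius `σ` turns the lower-right entry of `s_c⁻¹gs_c` into `yσ(λ)μ(c)`, where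
  `μ(c) = (σ(rc) - rc)/(σc - c)`. Singular `h` contribute `0`, so the sum over `h` becomes a sum
  over `λ ∈ K`, which is the sum over `C`.
Finally `μ(c) = t` exactly when `c ∈ (r - t)⁻¹ 𝔽_q^×`, so on `K ∖ 𝔽_q` the function `μ` takes
every value `t ∈ 𝔽_q` exactly `q - 1` times.
-/
open Matrix FiniteField

section Sums

variable {G M : Type*} [Group G] [AddCommMonoid M]

theorem Fintype.sum_eq_card_nsmul_sum_of_bijective [Fintype G] {B : Subgroup G} [Fintype B]
    {ι : Type*} [Fintype ι] (s : ι → G) (hs : Function.Bijective fun p : ι × B => s p.1 * p.2)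
    (f : G → M) (hf : ∀ u, ∀ b ∈ B, f (u * b) = f u) :
    ∑ u, f u = Fintype.card B • ∑ i, f (s i) := by
  rw [← Fintype.sum_bijective _ hs (fun p => f (s p.1)) f fun p => (hf _ _ p.2.2).symm,
    Fintype.sum_prod_type, Finset.smul_sum]
  simp

theorem Subgroup.sum_conj {H : Subgroup G} [Fintype H] {j : G} (hj : j ∈ H) (f : G → M) :
    ∑ h : H, f (j * h * j⁻¹) = ∑ h : H, f h :=
  Fintype.sum_equiv (MulAut.conj (⟨j, hj⟩ : H)).toEquiv _ _ fun _ => rfl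

theorem Fintype.sum_units_eq_sum {R : Type*} [Monoid R] [Fintype R] [Fintype Rˣ] (f : R → M)
    (hf : ∀ r, ¬IsUnit r → f r = 0) : ∑ u : Rˣ, f u = ∑ r, f r := by
  refine (Finset.sum_map _ ⟨((↑) : Rˣ → R), fun _ _ => Units.ext⟩ f).symm.trans ?_
  refine Finset.sum_subset (Finset.subset_univ _) fun r _ hr => hf r ?_
  rintro ⟨u, rfl⟩
  exact hr (Finset.mem_map_of_mem _ (Finset.mem_univ u))

theorem Fintype.sum_matrix_fin_two {α β : Type*} [Fintype α] [Fintype β]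
    (e : (Fin 2 → α) ≃ β) (Φ : β → β → M) :
    ∑ A : Matrix (Fin 2) (Fin 2) α, Φ (e (A 0)) (e (A 1)) = ∑ u, ∑ v, Φ u v := by
  rw [← Fintype.sum_prod_type']
  exact Fintype.sum_equiv ((Equiv.piCongrRight fun _ => e).trans (finTwoArrowEquiv β)) _ _
    fun _ => rfl

end Sums

section ExtK

variable {K : Type*} [Field K]

theorem extK_units (χ : Kˣ →* ℂˣ) (u : Kˣ) : extK χ (u : K) = χ u := by
  simp [extK, u.ne_zero]

theorem extK_zero (χ : Kˣ →* ℂˣ) : extK χ 0 = 0 := dif_pos rfl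

theorem extK_mul (χ : Kˣ →* ℂˣ) (a b : K) : extK χ (a * b) = extK χ a * extK χ b := by
  rcases eq_or_ne a 0 with rfl | ha
  · simp [extK_zero]
  rcases eq_or_ne b 0 with rfl | hb
  · simp [extK_zero]
  rw [← Units.val_mk0 ha, ← Units.val_mk0 hb, ← Units.val_mul, extK_units, extK_units, extK_units,
    map_mul, Units.val_mul]

theorem coe_diagGL (x y : Kˣ) :
    (diagGL x y : Matrix (Fin 2) (Fin 2) K) = !![(x : K), 0; 0, (y : K)] :=
  IsUnit.unit_spec _

theorem sum_filter_diag_pow [Fintype K] (θ₁ θ₂ : Kˣ →* ℂˣ) (q : ℕ) :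
    ∑ u ∈ Finset.univ.filter (fun u : GL (Fin 2) K =>
        ∃ a : Kˣ, (u : Matrix (Fin 2) (Fin 2) K) = !![(a : K), 0; 0, (a : K) ^ q]),
      extK θ₁ ((u : Matrix (Fin 2) (Fin 2) K) 0 0) * extK θ₂ ((u : Matrix (Fin 2) (Fin 2) K) 1 1)
      = ∑ l : K, extK θ₁ l * extK θ₂ (l ^ q) := by
  have himage : Finset.univ.filter (fun u : GL (Fin 2) K =>
      ∃ a : Kˣ, (u : Matrix (Fin 2) (Fin 2) K) = !![(a : K), 0; 0, (a : K) ^ q])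
      = Finset.univ.image fun a : Kˣ => diagGL a (a ^ q) := by
    ext u
    simp only [Finset.mem_filter, Finset.mem_image, Finset.mem_univ, true_and]
    refine exists_congr fun a => ?_
    rw [eq_comm, Units.ext_iff, coe_diagGL, Units.val_pow_eq_pow_val]
  rw [himage, Finset.sum_image fun a _ b _ hab => Units.ext <| by
      simpa [coe_diagGL] using
        congrArg (fun u : GL (Fin 2) K => (u : Matrix (Fin 2) (Fin 2) K) 0 0) hab,
    ← Fintype.sum_units_eq_sum (fun l : K => extK θ₁ l * extK θ₂ (l ^ q)) fun l hl => by
      rw [isUnit_iff_ne_zero, not_not] at hl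
      rw [hl, extK_zero, zero_mul]]
  simp [coe_diagGL]

end ExtK

noncomputable section Borel

variable (K : Type*) [Field K]

def borelSubgroup : Subgroup (GL (Fin 2) K) where
  carrier := {u | (u : Matrix (Fin 2) (Fin 2) K) 1 0 = 0}
  mul_mem' {a b} ha hb := by simp_all [Matrix.mul_apply, Fin.sum_univ_two]
  one_mem' := by simp
  inv_mem' {u} hu := by
    simp_all [Matrix.coe_units_inv, Matrix.inv_def, Matrix.adjugate_fin_two]

variable {K}

theorem mem_borelSubgroup {u : GL (Fin 2) K} :
    u ∈ borelSubgroup K ↔ (u : Matrix (Fin 2) (Fin 2) K) 1 0 = 0 := Iff.rfl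

theorem apply_zero_zero_ne_zero_of_mem_borelSubgroup {b : GL (Fin 2) K}
    (hb : b ∈ borelSubgroup K) : (b : Matrix (Fin 2) (Fin 2) K) 0 0 ≠ 0 := by
  intro h
  have := (Matrix.isUnit_iff_isUnit_det _).mp b.isUnit
  rw [mem_borelSubgroup] at hb
  simp_all [Matrix.det_fin_two]

def borelDiag (i : Fin 2) : borelSubgroup K →* K where
  toFun b := ((b : GL (Fin 2) K) : Matrix (Fin 2) (Fin 2) K) i i
  map_one' := by simp
  map_mul' a b := by
    have ha := mem_borelSubgroup.mp a.2
    have hb := mem_borelSubgroup.mp b.2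
    fin_cases i <;> simp [Matrix.mul_apply, Fin.sum_univ_two, ha, hb]

theorem borelDiag_conj (i : Fin 2) (a b : borelSubgroup K) :
    borelDiag i (b⁻¹ * a * b) = borelDiag i a := by
  rw [map_mul, map_mul, mul_right_comm, ← map_mul, inv_mul_cancel, map_one, one_mul]

variable (θ₁ θ₂ : Kˣ →* ℂˣ)

def borelWeight (a : Matrix (Fin 2) (Fin 2) K) : ℂ :=
  if a 1 0 = 0 then extK θ₁ (a 0 0) * extK θ₂ (a 1 1) else 0

theorem borelWeight_conj (a : GL (Fin 2) K) {b : GL (Fin 2) K} (hb : b ∈ borelSubgroup K) :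
    borelWeight θ₁ θ₂ ↑(b⁻¹ * a * b : GL (Fin 2) K) = borelWeight θ₁ θ₂ a := by
  by_cases ha : a ∈ borelSubgroup K
  · have hconj : b⁻¹ * a * b ∈ borelSubgroup K :=
      mul_mem (mul_mem (inv_mem hb) ha) hb
    have hdiag (i : Fin 2) := borelDiag_conj i ⟨a, ha⟩ ⟨b, hb⟩
    simp only [borelWeight, if_pos (mem_borelSubgroup.mp hconj), if_pos (mem_borelSubgroup.mp ha)]
    exact congrArg₂ (fun d₀ d₁ => extK θ₁ d₀ * extK θ₂ d₁) (hdiag 0) (hdiag 1)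
  · have hconj : b⁻¹ * a * b ∉ borelSubgroup K := fun h => ha <| by
      simpa [mul_assoc] using mul_mem (mul_mem hb h) (inv_mem hb)
    simp only [borelWeight, if_neg (mt mem_borelSubgroup.mpr hconj),
      if_neg (mt mem_borelSubgroup.mpr ha)]

theorem borelWeight_eq_zero_of_det_eq_zero {a : Matrix (Fin 2) (Fin 2) K} (ha : a.det = 0) :
    borelWeight θ₁ θ₂ a = 0 := by
  unfold borelWeight
  split_ifs with h10
  · rw [Matrix.det_fin_two, h10, mul_zero, sub_zero] at ha
    rcases mul_eq_zero.mp ha with h | h <;> simp [h, extK_zero]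
  · rfl

theorem borelWeight_diagGL_mul (x y : Kˣ) (a : Matrix (Fin 2) (Fin 2) K) :
    borelWeight θ₁ θ₂ (diagGL x y * a) = θ₁ x * θ₂ y * borelWeight θ₁ θ₂ a := by
  simp only [borelWeight, coe_diagGL, Matrix.mul_apply, Fin.sum_univ_two]
  simp [extK_mul, extK_units, mul_mul_mul_comm]

theorem sum_borelWeight_diagGL_mul (H : Subgroup (GL (Fin 2) K)) [Fintype H] (x y : Kˣ) :
    ∑ h : H, borelWeight θ₁ θ₂ ↑(diagGL x y * h : GL (Fin 2) K)
      = θ₁ x * θ₂ y * ∑ h : H, borelWeight θ₁ θ₂ ↑(h : GL (Fin 2) K) := by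
  simp only [Units.val_mul, borelWeight_diagGL_mul, Finset.mul_sum]

theorem sum_borelWeight_subgroup [Fintype K] (H : Subgroup (GL (Fin 2) K)) [Fintype H] :
    ∑ h : H, borelWeight θ₁ θ₂ ↑(h : GL (Fin 2) K)
      = ∑ b ∈ Finset.univ.filter (fun b : GL (Fin 2) K =>
          (b : Matrix (Fin 2) (Fin 2) K) 1 0 = 0 ∧ b ∈ H),
        extK θ₁ ((b : Matrix (Fin 2) (Fin 2) K) 0 0) *
          extK θ₂ ((b : Matrix (Fin 2) (Fin 2) K) 1 1) := by
  rw [Finset.sum_filter, ← Finset.sum_subtype (Finset.univ.filter (· ∈ H)) (by simp)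
    fun b : GL (Fin 2) K => borelWeight θ₁ θ₂ b, Finset.sum_filter]
  refine Finset.sum_congr rfl fun b _ => ?_
  by_cases hb : b ∈ H <;> simp [borelWeight, hb]

end Borel

noncomputable section Transversal

def swapGL (R : Type*) [CommRing R] : GL (Fin 2) R :=
  ⟨!![0, 1; 1, 0], !![0, 1; 1, 0], by simp [Matrix.one_fin_two], by simp [Matrix.one_fin_two]⟩

def lowerUnipotent {R : Type*} [CommRing R] (c : R) : GL (Fin 2) R :=
  ⟨!![1, 0; c, 1], !![1, 0; -c, 1], by simp [Matrix.one_fin_two], by simp [Matrix.one_fin_two]⟩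

variable {K : Type*} [Field K]

theorem lowerUnipotent_zero : lowerUnipotent (0 : K) = 1 := by
  ext i j
  fin_cases i <;> fin_cases j <;> rfl

def borelTransversal : Option K → GL (Fin 2) K := fun ℓ => ℓ.elim (swapGL K) lowerUnipotent

def lineOf (u : GL (Fin 2) K) : Option K :=
  if (u : Matrix (Fin 2) (Fin 2) K) 0 0 = 0 then none
  else some ((u : Matrix (Fin 2) (Fin 2) K) 1 0 / (u : Matrix (Fin 2) (Fin 2) K) 0 0)

theorem lineOf_borelTransversal_mul (ℓ : Option K) {b : GL (Fin 2) K}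
    (hb : b ∈ borelSubgroup K) : lineOf (borelTransversal ℓ * b) = ℓ := by
  have hb00 := apply_zero_zero_ne_zero_of_mem_borelSubgroup hb
  rw [mem_borelSubgroup] at hb
  cases ℓ <;>
    simp [lineOf, borelTransversal, swapGL, lowerUnipotent, Matrix.mul_apply, Fin.sum_univ_two,
      hb, hb00]

theorem borelTransversal_lineOf_inv_mul_mem (u : GL (Fin 2) K) :
    (borelTransversal (lineOf u))⁻¹ * u ∈ borelSubgroup K := by
  rw [mem_borelSubgroup]
  by_cases h : (u : Matrix (Fin 2) (Fin 2) K) 0 0 = 0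
  · simp [lineOf, h, borelTransversal, swapGL, Matrix.mul_apply, Fin.sum_univ_two]
  · simp [lineOf, h, borelTransversal, lowerUnipotent, Matrix.mul_apply, Fin.sum_univ_two]

theorem bijective_borelTransversal_mul :
    Function.Bijective fun p : Option K × borelSubgroup K => borelTransversal p.1 * p.2 := by
  refine ⟨fun ⟨ℓ, b⟩ ⟨ℓ', b'⟩ h => ?_, fun u => ?_⟩
  · obtain rfl : ℓ = ℓ' := by
      simpa only [lineOf_borelTransversal_mul _ b.2, lineOf_borelTransversal_mul _ b'.2]
        using congrArg lineOf h
    simpa using h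
  · exact ⟨(lineOf u, ⟨_, borelTransversal_lineOf_inv_mul_mem u⟩), mul_inv_cancel_left _ _⟩

variable [Fintype K]

theorem indB_eq_sum_borelTransversal (θ₁ θ₂ : Kˣ →* ℂˣ) (g : GL (Fin 2) K) :
    indB θ₁ θ₂ g = ∑ ℓ, borelWeight θ₁ θ₂
      ↑((borelTransversal ℓ)⁻¹ * g * borelTransversal ℓ : GL (Fin 2) K) := by
  have hcard : {u : GL (Fin 2) K | (u : Matrix (Fin 2) (Fin 2) K) 1 0 = 0}.toFinset.card
      = Fintype.card (borelSubgroup K) := by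
    rw [Set.toFinset_card]
    exact Fintype.card_congr (Equiv.refl _)
  have hsum := Fintype.sum_eq_card_nsmul_sum_of_bijective _ bijective_borelTransversal_mul
    (fun u => borelWeight θ₁ θ₂ ↑(u⁻¹ * g * u : GL (Fin 2) K)) fun u b hb => by
      simpa [mul_assoc] using borelWeight_conj θ₁ θ₂ (u⁻¹ * g * u) hb
  calc indB θ₁ θ₂ g
      = (Fintype.card (borelSubgroup K) : ℂ)⁻¹ *
          ∑ u, borelWeight θ₁ θ₂ ↑(u⁻¹ * g * u : GL (Fin 2) K) := by
        rw [indB, hcard]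
        rfl
    _ = _ := by
        rw [hsum, nsmul_eq_mul, inv_mul_cancel_left₀ (Nat.cast_ne_zero.mpr Fintype.card_ne_zero)]

end Transversal

section Conjugation

variable {K : Type*} [Field K] (θ₁ θ₂ : Kˣ →* ℂˣ) (x y : Kˣ)

theorem swapGL_inv_mul_diagGL_mul_swapGL :
    (swapGL K)⁻¹ * diagGL x y * swapGL K = diagGL y x := by
  ext i j
  fin_cases i <;> fin_cases j <;> simp [swapGL, coe_diagGL, Matrix.mul_apply, Fin.sum_univ_two]

theorem sum_borelWeight_swapGL_conj (H : Subgroup (GL (Fin 2) K)) [Fintype H]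
    (hJ : swapGL K ∈ H) :
    ∑ h : H, borelWeight θ₁ θ₂ ↑((swapGL K)⁻¹ * (diagGL x y * h) * swapGL K : GL (Fin 2) K)
      = ∑ h : H, borelWeight θ₁ θ₂ ↑(diagGL y x * h : GL (Fin 2) K) := by
  rw [← Subgroup.sum_conj (H.inv_mem hJ) (fun h => borelWeight θ₁ θ₂ ↑(diagGL y x * h))]
  refine Finset.sum_congr rfl fun h _ => ?_
  rw [inv_inv, ← swapGL_inv_mul_diagGL_mul_swapGL x y]
  group

theorem coe_lowerUnipotent_conj (c : K) (g : Matrix (Fin 2) (Fin 2) K) :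
    (↑(lowerUnipotent c)⁻¹ : Matrix (Fin 2) (Fin 2) K) * g * (lowerUnipotent c : Matrix _ _ K)
      = !![g 0 0 + g 0 1 * c, g 0 1;
          g 1 0 + g 1 1 * c - c * (g 0 0 + g 0 1 * c), g 1 1 - c * g 0 1] := by
  ext i j
  fin_cases i <;> fin_cases j <;>
    simp [lowerUnipotent, Matrix.mul_apply, Matrix.vecMul, dotProduct, Fin.sum_univ_two] <;> ring

theorem borelWeight_lowerUnipotent_conj_diagGL_mul (c : K) (g : Matrix (Fin 2) (Fin 2) K) :
    borelWeight θ₁ θ₂ ((↑(lowerUnipotent c)⁻¹ : Matrix (Fin 2) (Fin 2) K) *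
        ((diagGL x y : Matrix _ _ K) * g) * (lowerUnipotent c : Matrix _ _ K))
      = if y * (g 1 0 + g 1 1 * c) = c * (x * (g 0 0 + g 0 1 * c)) then
          extK θ₁ (x * (g 0 0 + g 0 1 * c)) * extK θ₂ (y * g 1 1 - c * (x * g 0 1))
        else 0 := by
  rw [coe_lowerUnipotent_conj, borelWeight]
  simp [coe_diagGL, Matrix.mul_apply, Fin.sum_univ_two, sub_eq_zero, mul_add, mul_assoc]

end Conjugation

section Frobenius

variable {F K : Type*} [Field F] [Field K] [Algebra F K]

theorem algebraMap_div_sub_notMem_range {r : K} (hr : r ∉ Set.range (algebraMap F K)) {a : F}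
    (ha : a ≠ 0) (t : F) :
    algebraMap F K a / (r - algebraMap F K t) ∉ Set.range (algebraMap F K) := by
  have hrt : r - algebraMap F K t ≠ 0 := sub_ne_zero.mpr fun h => hr ⟨t, h.symm⟩
  have ha' : algebraMap F K a ≠ 0 := (map_ne_zero _).mpr ha
  rintro ⟨s, hs⟩
  have hs0 : s ≠ 0 := by
    rintro rfl
    exact div_ne_zero ha' hrt (by simpa using hs.symm)
  refine hr ⟨t + a / s, ?_⟩
  rw [map_add, map_div₀, hs]
  field_simp
  ring

variable [Fintype F]

theorem frobeniusAlgHom_sub_self_algebraMap_add_mul (a b : F) (c : K) :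
    frobeniusAlgHom F K (algebraMap F K a + algebraMap F K b * c)
        - (algebraMap F K a + algebraMap F K b * c)
      = algebraMap F K b * (frobeniusAlgHom F K c - c) := by
  simp only [map_add, map_mul, AlgHom.commutes]
  ring

theorem frobeniusAlgHom_eq_self_iff [Finite K] {z : K} :
    frobeniusAlgHom F K z = z ↔ z ∈ Set.range (algebraMap F K) := by
  refine ⟨fun hz => (IsGalois.mem_range_algebraMap_iff_fixed z).mpr fun f => ?_, ?_⟩
  · obtain ⟨n, rfl⟩ := (bijective_frobeniusAlgEquivOfAlgebraic_pow F K).2 f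
    have hz' : frobeniusAlgEquivOfAlgebraic F K z = z := hz
    show (frobeniusAlgEquivOfAlgebraic F K ^ (n : ℕ)) z = z
    rw [AlgEquiv.coe_pow]
    exact Function.iterate_fixed hz' n
  · rintro ⟨a, rfl⟩
    exact AlgHom.commutes _ a

theorem frobeniusAlgHom_sub_self_ne_zero [Finite K] {c : K}
    (hc : c ∉ Set.range (algebraMap F K)) : frobeniusAlgHom F K c - c ≠ 0 :=
  sub_ne_zero.mpr (mt frobeniusAlgHom_eq_self_iff.mp hc)

theorem frobeniusAlgHom_frobeniusAlgHom [Fintype K] (hK : Fintype.card K = Fintype.card F ^ 2)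
    (z : K) : frobeniusAlgHom F K (frobeniusAlgHom F K z) = z := by
  simp only [coe_frobeniusAlgHom, ← pow_mul, ← sq, ← hK, FiniteField.pow_card]

variable (F) in
noncomputable def frobeniusQuotient (r c : K) : K :=
  (frobeniusAlgHom F K (r * c) - r * c) / (frobeniusAlgHom F K c - c)

-- With `l = a₀ + a c`, `k = b₀ + b c` (`a₀, a, b₀, b ∈ 𝔽_q`) and `g = diag(x,y)·[[a₀,a],[b₀,b]]`,
-- the left side is the lower-right entry of `s_c⁻¹gs_c`.
theorem sub_mul_eq_mul_frobeniusQuotient {x y c l k a b : K} (hy : y ≠ 0)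
    (hD : frobeniusAlgHom F K c - c ≠ 0)
    (hl : frobeniusAlgHom F K l - l = a * (frobeniusAlgHom F K c - c))
    (hk : frobeniusAlgHom F K k - k = b * (frobeniusAlgHom F K c - c))
    (h : y * k = c * (x * l)) :
    y * b - c * (x * a) = y * frobeniusAlgHom F K l * frobeniusQuotient F (x / y) c := by
  have hσy : frobeniusAlgHom F K y ≠ 0 := (map_ne_zero _).mpr hy
  have hσ := congrArg (frobeniusAlgHom F K) h
  simp only [map_mul] at hσ
  rw [frobeniusQuotient, map_mul, map_div₀, mul_div_assoc', eq_div_iff hD, sub_mul, mul_assoc,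
    mul_assoc c, mul_assoc x, ← hl, ← hk]
  field_simp
  linear_combination -frobeniusAlgHom F K y * h + y * hσ

variable [Fintype K] {r : K}

theorem frobeniusQuotient_algebraMap_div_sub (hr : r ∉ Set.range (algebraMap F K)) {a : F}
    (ha : a ≠ 0) (t : F) :
    frobeniusQuotient F r (algebraMap F K a / (r - algebraMap F K t)) = algebraMap F K t := by
  have hrt : r - algebraMap F K t ≠ 0 := sub_ne_zero.mpr fun h => hr ⟨t, h.symm⟩
  set c := algebraMap F K a / (r - algebraMap F K t)
  have hrc : r * c = algebraMap F K a + algebraMap F K t * c := by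
    simp only [c]
    field_simp
    ring
  rw [frobeniusQuotient, hrc, frobeniusAlgHom_sub_self_algebraMap_add_mul,
    mul_div_cancel_right₀ _ (frobeniusAlgHom_sub_self_ne_zero
      (algebraMap_div_sub_notMem_range hr ha t))]

theorem frobeniusQuotient_mem_range (hK : Fintype.card K = Fintype.card F ^ 2) (r c : K) :
    frobeniusQuotient F r c ∈ Set.range (algebraMap F K) := by
  rw [← frobeniusAlgHom_eq_self_iff, frobeniusQuotient, map_div₀, map_sub, map_sub,
    frobeniusAlgHom_frobeniusAlgHom hK, frobeniusAlgHom_frobeniusAlgHom hK, ← neg_div_neg_eq,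
    neg_sub, neg_sub]

theorem sum_extK_frobeniusQuotient (hK : Fintype.card K = Fintype.card F ^ 2)
    (hr : r ∉ Set.range (algebraMap F K)) (θ : Kˣ →* ℂˣ) :
    ∑ c ∈ Finset.univ.filter (· ∉ Set.range (algebraMap F K)), extK θ (frobeniusQuotient F r c)
      = Fintype.card Fˣ • ∑ t : F, extK θ (algebraMap F K t) := by
  have hrt (t : F) : r - algebraMap F K t ≠ 0 := sub_ne_zero.mpr fun h => hr ⟨t, h.symm⟩
  have hpairs : Fintype.card Fˣ • ∑ t : F, extK θ (algebraMap F K t)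
      = ∑ p : F × Fˣ, extK θ (algebraMap F K p.1) := by
    simp [Fintype.sum_prod_type, Finset.smul_sum]
  rw [hpairs]
  symm
  refine Finset.sum_nbij (fun p : F × Fˣ => algebraMap F K p.2 / (r - algebraMap F K p.1))
    (fun p _ => by simpa using algebraMap_div_sub_notMem_range hr p.2.ne_zero p.1)
    (fun p _ q _ hpq => ?_) (fun c hc => ?_)
    (fun p _ => by rw [frobeniusQuotient_algebraMap_div_sub hr p.2.ne_zero])
  · simp only at hpq
    have ht := frobeniusQuotient_algebraMap_div_sub hr p.2.ne_zero p.1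
    rw [hpq, frobeniusQuotient_algebraMap_div_sub hr q.2.ne_zero q.1] at ht
    have h1 : p.1 = q.1 := (algebraMap F K).injective ht.symm
    rw [h1, div_left_inj' (hrt q.1), (algebraMap F K).injective.eq_iff, Units.val_inj] at hpq
    exact Prod.ext h1 hpq
  · have hc' : c ∉ Set.range (algebraMap F K) := by simpa using hc
    have hc0 : c ≠ 0 := fun h => hc' ⟨0, by simp [h]⟩
    obtain ⟨t, ht⟩ := frobeniusQuotient_mem_range hK r c
    obtain ⟨a, ha⟩ : (r - algebraMap F K t) * c ∈ Set.range (algebraMap F K) := by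
      have key : algebraMap F K t * (frobeniusAlgHom F K c - c)
          = frobeniusAlgHom F K (r * c) - r * c := by
        rw [ht, frobeniusQuotient, div_mul_cancel₀ _ (frobeniusAlgHom_sub_self_ne_zero hc')]
      rw [← frobeniusAlgHom_eq_self_iff, ← sub_eq_zero]
      simp only [map_mul, map_sub, AlgHom.commutes] at key ⊢
      linear_combination -key
    have ha0 : a ≠ 0 := by
      rintro rfl
      simp [hrt t, hc0] at ha
    refine ⟨(t, Units.mk0 a ha0), Finset.mem_coe.mpr (Finset.mem_univ _), ?_⟩
    simp only [Units.val_mk0, ha]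
    field_simp [hrt t]

end Frobenius

noncomputable section Subfield

variable {F K : Type*} [Field F] [Field K] [Algebra F K] (θ₁ θ₂ : Kˣ →* ℂˣ) (x y : Kˣ)

theorem swapGL_mem_Hsub : swapGL K ∈ Hsub F K :=
  ⟨swapGL F, by ext i j; fin_cases i <;> fin_cases j <;> simp [swapGL]⟩

theorem sum_Hsub_lowerUnipotent_conj_eq_zero [Fintype K]
    (hxy : ((x⁻¹ * y : Kˣ) : K) ∉ Set.range (algebraMap F K)) {t : F} (ht : t ≠ 0) :
    ∑ h : Hsub F K, borelWeight θ₁ θ₂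
      ↑((lowerUnipotent (algebraMap F K t))⁻¹ * (diagGL x y * h) *
        lowerUnipotent (algebraMap F K t) : GL (Fin 2) K) = 0 := by
  refine Finset.sum_eq_zero fun ⟨_, a, rfl⟩ _ => ?_
  simp only [Units.val_mul, borelWeight_lowerUnipotent_conj_diagGL_mul, Units.coe_map,
    RingHom.toMonoidHom_eq_coe, MonoidHom.coe_coe, RingHom.mapMatrix_apply, Matrix.map_apply]
  simp only [← map_mul, ← map_add]
  split_ifs with hcond
  · set l := (a : Matrix (Fin 2) (Fin 2) F) 0 0 + a 0 1 * t
    set k := (a : Matrix (Fin 2) (Fin 2) F) 1 0 + a 1 1 * t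
    rcases eq_or_ne l 0 with hl | hl
    · simp [hl, extK_zero]
    have hk : k ≠ 0 := by
      intro hk
      simp [hk, ht, hl] at hcond
    refine absurd ⟨t * l / k, ?_⟩ hxy
    simp only [map_div₀, map_mul, Units.val_mul, Units.val_inv_eq_inv_val]
    field_simp
    rw [div_eq_iff ((map_ne_zero _).mpr hk)]
    linear_combination -hcond
  · rfl

variable [Fintype F]

theorem sum_units_map_eq_sum_extK (θ : Kˣ →* ℂˣ) :
    ∑ t : Fˣ, ((θ (Units.map (algebraMap F K).toMonoidHom t) : ℂˣ) : ℂ)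
      = ∑ t : F, extK θ (algebraMap F K t) := by
  rw [← Fintype.sum_units_eq_sum (fun t : F => extK θ (algebraMap F K t)) fun t ht => by
    rw [isUnit_iff_ne_zero, not_not] at ht
    rw [ht, map_zero, extK_zero]]
  simp [← extK_units]

variable [Fintype K]

def coordsEquiv (hK : Fintype.card K = Fintype.card F ^ 2) {c : K}
    (hc : c ∉ Set.range (algebraMap F K)) : (Fin 2 → F) ≃ K :=
  Equiv.ofBijective (fun v => algebraMap F K (v 0) + algebraMap F K (v 1) * c) <|
    (Fintype.bijective_iff_injective_and_card _).mpr ⟨fun v w hvw => by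
      have h1 : v 1 = w 1 := by
        have := congrArg (fun z => frobeniusAlgHom F K z - z) hvw
        simp only [frobeniusAlgHom_sub_self_algebraMap_add_mul] at this
        exact (algebraMap F K).injective
          (mul_right_cancel₀ (frobeniusAlgHom_sub_self_ne_zero hc) this)
      have h0 : v 0 = w 0 := by
        simpa [h1] using hvw
      funext i
      fin_cases i
      exacts [h0, h1], by simp [hK]⟩

theorem coordsEquiv_apply (hK : Fintype.card K = Fintype.card F ^ 2) {c : K}
    (hc : c ∉ Set.range (algebraMap F K)) (v : Fin 2 → F) :
    coordsEquiv hK hc v = algebraMap F K (v 0) + algebraMap F K (v 1) * c := rfl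

theorem sum_Hsub_eq_sum_matrix (φ : Matrix (Fin 2) (Fin 2) K → ℂ)
    (hφ : ∀ A : Matrix (Fin 2) (Fin 2) F, A.det = 0 → φ (A.map (algebraMap F K)) = 0) :
    ∑ h : Hsub F K, φ ((h : GL (Fin 2) K) : Matrix _ _ K)
      = ∑ A : Matrix (Fin 2) (Fin 2) F, φ (A.map (algebraMap F K)) := by
  have hinj : Function.Injective (Units.map (algebraMap F K).mapMatrix.toMonoidHom :
      GL (Fin 2) F →* GL (Fin 2) K) :=
    Units.map_injective (Matrix.map_injective (algebraMap F K).injective)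
  rw [← Fintype.sum_units_eq_sum (fun A : Matrix (Fin 2) (Fin 2) F => φ (A.map (algebraMap F K)))
    fun A hA => hφ A ?_]
  · exact (Fintype.sum_equiv (κ := Hsub F K) (MonoidHom.ofInjective hinj).toEquiv
      (fun a => φ ((a : Matrix _ _ F).map (algebraMap F K)))
      (fun h => φ ((h : GL (Fin 2) K) : Matrix _ _ K)) fun _ => rfl).symm
  · rwa [Matrix.isUnit_iff_isUnit_det, isUnit_iff_ne_zero, not_not] at hA

theorem sum_Hsub_lowerUnipotent_conj_of_notMem_range
    (hK : Fintype.card K = Fintype.card F ^ 2) {c : K} (hc : c ∉ Set.range (algebraMap F K)) :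
    ∑ h : Hsub F K, borelWeight θ₁ θ₂
        ↑((lowerUnipotent c)⁻¹ * (diagGL x y * h) * lowerUnipotent c : GL (Fin 2) K)
      = θ₁ x * θ₂ y * extK θ₂ (frobeniusQuotient F ((x : K) / y) c) *
          ∑ l : K, extK θ₁ l * extK θ₂ (l ^ Fintype.card F) := by
  have hD := frobeniusAlgHom_sub_self_ne_zero hc
  set e := coordsEquiv hK hc
  set Φ : K → K → ℂ := fun l k => if (y : K) * k = c * (x * l) then
    extK θ₁ (x * l) * extK θ₂ (y * frobeniusAlgHom F K l * frobeniusQuotient F ((x : K) / y) c)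
    else 0
  have hterm (A : Matrix (Fin 2) (Fin 2) F) :
      borelWeight θ₁ θ₂ ((↑(lowerUnipotent c)⁻¹ : Matrix (Fin 2) (Fin 2) K) *
        ((diagGL x y : Matrix _ _ K) * A.map (algebraMap F K)) * (lowerUnipotent c : Matrix _ _ K))
      = Φ (e (A 0)) (e (A 1)) := by
    rw [borelWeight_lowerUnipotent_conj_diagGL_mul]
    simp only [Matrix.map_apply, Φ, e, coordsEquiv_apply]
    split_ifs with hcond
    · rw [sub_mul_eq_mul_frobeniusQuotient y.ne_zero hD
        (frobeniusAlgHom_sub_self_algebraMap_add_mul _ _ c)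
        (frobeniusAlgHom_sub_self_algebraMap_add_mul _ _ c) hcond]
      exact if_pos hcond
    · exact if_neg hcond
  calc _ = ∑ A : Matrix (Fin 2) (Fin 2) F, Φ (e (A 0)) (e (A 1)) := by
        simp only [Units.val_mul]
        rw [sum_Hsub_eq_sum_matrix (fun g => borelWeight θ₁ θ₂
          ((↑(lowerUnipotent c)⁻¹ : Matrix (Fin 2) (Fin 2) K) *
            ((diagGL x y : Matrix (Fin 2) (Fin 2) K) * g) *
            (lowerUnipotent c : Matrix (Fin 2) (Fin 2) K)))
          fun A hA => borelWeight_eq_zero_of_det_eq_zero _ _ ?_]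
        · exact Fintype.sum_congr _ _ hterm
        · rw [Matrix.det_mul, Matrix.det_mul, Matrix.det_mul, ← RingHom.mapMatrix_apply,
            ← RingHom.map_det, hA, map_zero, mul_zero, mul_zero, zero_mul]
    _ = ∑ l, ∑ k, Φ l k := Fintype.sum_matrix_fin_two e Φ
    _ = ∑ l : K, extK θ₁ (x * l) *
          extK θ₂ (y * frobeniusAlgHom F K l * frobeniusQuotient F ((x : K) / y) c) := by
        refine Fintype.sum_congr _ _ fun l => ?_
        have hcond (k : K) : (y : K) * k = c * (x * l) ↔ k = c * (x * l) / y := by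
          rw [eq_div_iff y.ne_zero, mul_comm]
        simp only [Φ, hcond, Finset.sum_ite_eq', Finset.mem_univ, if_true]
    _ = _ := by
        simp only [extK_mul, extK_units, coe_frobeniusAlgHom, Finset.mul_sum]
        exact Finset.sum_congr rfl fun l _ => by ring

theorem sum_sum_Hsub_lowerUnipotent_conj (hK : Fintype.card K = Fintype.card F ^ 2)
    (hxy : ((x⁻¹ * y : Kˣ) : K) ∉ Set.range (algebraMap F K)) :
    ∑ c : K, ∑ h : Hsub F K, borelWeight θ₁ θ₂
        ↑((lowerUnipotent c)⁻¹ * (diagGL x y * h) * lowerUnipotent c : GL (Fin 2) K)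
      = θ₁ x * θ₂ y * (∑ h : Hsub F K, borelWeight θ₁ θ₂ ↑(h : GL (Fin 2) K) +
          Fintype.card Fˣ • ((∑ l : K, extK θ₁ l * extK θ₂ (l ^ Fintype.card F)) *
            ∑ t : F, extK θ₂ (algebraMap F K t))) := by
  have hr : (x : K) / y ∉ Set.range (algebraMap F K) := fun ⟨s, hs⟩ =>
    hxy ⟨s⁻¹, by rw [map_inv₀, hs]; simp [div_eq_mul_inv, mul_comm]⟩
  rw [← Finset.sum_filter_add_sum_filter_not _ (· ∈ Set.range (algebraMap F K)),
    Finset.sum_eq_single_of_mem 0 (by simp) fun c hc hc0 => ?_,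
    Finset.sum_congr rfl fun c hc =>
      sum_Hsub_lowerUnipotent_conj_of_notMem_range θ₁ θ₂ x y hK (Finset.mem_filter.mp hc).2,
    ← Finset.sum_mul, ← Finset.mul_sum, sum_extK_frobeniusQuotient hK hr]
  · simp only [lowerUnipotent_zero, inv_one, one_mul, mul_one, sum_borelWeight_diagGL_mul]
    ring
  · obtain ⟨t, rfl⟩ := (Finset.mem_filter.mp hc).2
    exact sum_Hsub_lowerUnipotent_conj_eq_zero θ₁ θ₂ x y hxy fun ht => hc0 (by simp [ht])

end Subfield

theorem stmt_18_general (q : ℕ)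
    (F K : Type) [Field F] [Field K] [Fintype F] [Fintype K] [Algebra F K]
    (hF : Fintype.card F = q) (hK : Fintype.card K = q ^ 2)
    (θ₁ θ₂ : Kˣ →* ℂˣ) (x y : Kˣ)
    (hxy : ((x⁻¹ * y : Kˣ) : K) ∉ Set.range (algebraMap F K)) :
    ∑ h : ↥(Hsub F K), indB θ₁ θ₂ (diagGL x y * (h : (Matrix (Fin 2) (Fin 2) K)ˣ))
    = (((θ₁ x : ℂˣ) : ℂ) * ((θ₂ y : ℂˣ) : ℂ) + ((θ₁ y : ℂˣ) : ℂ) * ((θ₂ x : ℂˣ) : ℂ)) *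
        (∑ b ∈ Finset.univ.filter (fun b : (Matrix (Fin 2) (Fin 2) K)ˣ =>
            (b : Matrix (Fin 2) (Fin 2) K) 1 0 = 0 ∧ b ∈ Hsub F K),
          extK θ₁ ((b : Matrix (Fin 2) (Fin 2) K) 0 0) *
          extK θ₂ ((b : Matrix (Fin 2) (Fin 2) K) 1 1)) +
      ((q : ℂ) - 1) * (((θ₁ x : ℂˣ) : ℂ) * ((θ₂ y : ℂˣ) : ℂ)) *
        (∑ u ∈ Finset.univ.filter (fun u : (Matrix (Fin 2) (Fin 2) K)ˣ =>
            ∃ a : Kˣ, (u : Matrix (Fin 2) (Fin 2) K) = !![(a : K), 0; 0, (a : K) ^ q]),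
          extK θ₁ ((u : Matrix (Fin 2) (Fin 2) K) 0 0) *
          extK θ₂ ((u : Matrix (Fin 2) (Fin 2) K) 1 1)) *
        (∑ t : Fˣ, ((θ₂ (Units.map (algebraMap F K).toMonoidHom t) : ℂˣ) : ℂ)) := by
  subst hF
  rw [sum_filter_diag_pow, sum_units_map_eq_sum_extK, ← sum_borelWeight_subgroup]
  calc _ = ∑ h : Hsub F K, borelWeight θ₁ θ₂
          ↑((swapGL K)⁻¹ * (diagGL x y * h) * swapGL K : GL (Fin 2) K) +
        ∑ c : K, ∑ h : Hsub F K, borelWeight θ₁ θ₂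
          ↑((lowerUnipotent c)⁻¹ * (diagGL x y * h) * lowerUnipotent c : GL (Fin 2) K) := by
        simp_rw [indB_eq_sum_borelTransversal]
        rw [Finset.sum_comm, Fintype.sum_option]
        rfl
    _ = _ := by
        rw [sum_borelWeight_swapGL_conj _ _ _ _ _ swapGL_mem_Hsub, sum_borelWeight_diagGL_mul,
          sum_sum_Hsub_lowerUnipotent_conj θ₁ θ₂ x y hK hxy, nsmul_eq_mul, Fintype.card_units,
          Nat.cast_sub Fintype.card_pos, Nat.cast_one]
        ring

/-- the character sum of the induced character `I[θ]` over the coset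
`diag(x,y)·H`, for `x⁻¹y ∉ 𝔽_q`. -/
theorem stmt_18 (q p n : ℕ) (hp : p.Prime) (hq : q = p ^ n) (hn : n ≠ 0)
    (F K : Type) [Field F] [Field K] [Fintype F] [Fintype K] [Algebra F K]
    (hF : Fintype.card F = q) (hK : Fintype.card K = q ^ 2)
    (θ₁ θ₂ : Kˣ →* ℂˣ) (x y : Kˣ)
    (hxy : ((x⁻¹ * y : Kˣ) : K) ∉ Set.range (algebraMap F K)) :
    ∑ h : ↥(Hsub F K), indB θ₁ θ₂ (diagGL x y * (h : (Matrix (Fin 2) (Fin 2) K)ˣ))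
    = (((θ₁ x : ℂˣ) : ℂ) * ((θ₂ y : ℂˣ) : ℂ) + ((θ₁ y : ℂˣ) : ℂ) * ((θ₂ x : ℂˣ) : ℂ)) *
        (∑ b ∈ Finset.univ.filter (fun b : (Matrix (Fin 2) (Fin 2) K)ˣ =>
            (b : Matrix (Fin 2) (Fin 2) K) 1 0 = 0 ∧ b ∈ Hsub F K),
          extK θ₁ ((b : Matrix (Fin 2) (Fin 2) K) 0 0) *
          extK θ₂ ((b : Matrix (Fin 2) (Fin 2) K) 1 1)) +
      ((q : ℂ) - 1) * (((θ₁ x : ℂˣ) : ℂ) * ((θ₂ y : ℂˣ) : ℂ)) *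
        (∑ u ∈ Finset.univ.filter (fun u : (Matrix (Fin 2) (Fin 2) K)ˣ =>
            ∃ a : Kˣ, (u : Matrix (Fin 2) (Fin 2) K) = !![(a : K), 0; 0, (a : K) ^ q]),
          extK θ₁ ((u : Matrix (Fin 2) (Fin 2) K) 0 0) *
          extK θ₂ ((u : Matrix (Fin 2) (Fin 2) K) 1 1)) *
        (∑ t : Fˣ, ((θ₂ (Units.map (algebraMap F K).toMonoidHom t) : ℂˣ) : ℂ)) :=
  stmt_18_general q F K hF hK θ₁ θ₂ x y hxy
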